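/- The Legendre polynomial P_k satisfies the Sturm–Liouville equation d/dx((1-x²) dP_k/dx) = -k(k+1) P_k on ℝ. -/

import Mathlib

/-!
Write `u = (X² - 1)ᵏ`, so that `P_k` is a constant multiple of `u⁽ᵏ⁾`. The polynomial `u`
satisfies the first-order equation `(X² - 1) u' = 2k X u`; differentiating it `k + 1` times by
the Leibniz rule (only three terms survive, since `X² - 1` is quadratic) gives
`(X² - 1) u⁽ᵏ⁺²⁾ + 2X u⁽ᵏ⁺¹⁾ = k(k+1) u⁽ᵏ⁾`, which is the Sturm–Liouville equation for `u⁽ᵏ⁾`.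
-/

open Polynomial

/-- The `k`-th Legendre polynomial, via the Rodrigues formula
`P_k = (1/(2^k k!)) d^k/dx^k (x² - 1)^k`; this normalization gives `P_k(1) = 1`. -/
noncomputable def legendre (k : ℕ) : Polynomial ℝ :=
  ((2 ^ k * k.factorial : ℝ)⁻¹) • derivative^[k] ((X ^ 2 - 1) ^ k)

namespace Polynomial

variable {R : Type*} [CommRing R]

lemma derivative_X_sq_sub_one : derivative (X ^ 2 - 1 : R[X]) = 2 * X := by
  rw [derivative_sub, derivative_X_sq, derivative_one, sub_zero, C_ofNat]

lemma X_sq_sub_one_mul_derivative_pow (k : ℕ) :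
    (X ^ 2 - 1 : R[X]) * derivative ((X ^ 2 - 1) ^ k) =
      2 * (k : R[X]) * X * (X ^ 2 - 1) ^ k := by
  rw [derivative_pow, derivative_X_sq_sub_one, C_eq_natCast]
  cases k with
  | zero => simp
  | succ n =>
    rw [Nat.add_sub_cancel]
    ring

lemma iterate_derivative_succ_X_mul (p : R[X]) (n : ℕ) :
    derivative^[n + 1] (X * p) =
      X * derivative^[n + 1] p + ((n : R[X]) + 1) * derivative^[n] p := by
  induction n with
  | zero => simp [derivative_mul, add_comm]
  | succ n ih =>
    rw [Function.iterate_succ_apply' _ (n + 1), ih]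
    simp only [derivative_add, derivative_mul, derivative_X, derivative_natCast, derivative_one,
      Function.iterate_succ_apply']
    push_cast
    ring

lemma iterate_derivative_succ_X_sq_sub_one_mul_derivative (p : R[X]) (n : ℕ) :
    derivative^[n + 1] ((X ^ 2 - 1) * derivative p) =
      (X ^ 2 - 1) * derivative^[n + 2] p + 2 * ((n : R[X]) + 1) * X * derivative^[n + 1] p
        + ((n : R[X]) + 1) * (n : R[X]) * derivative^[n] p := by
  induction n with
  | zero =>
    simp only [Function.iterate_succ_apply', Function.iterate_zero_apply, derivative_mul,
      derivative_X_sq_sub_one]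
    push_cast
    ring
  | succ n ih =>
    rw [Function.iterate_succ_apply' _ (n + 1), ih]
    simp only [derivative_add, derivative_mul, derivative_X, derivative_natCast, derivative_one,
      derivative_ofNat, derivative_X_sq_sub_one, Function.iterate_succ_apply']
    push_cast
    ring

lemma derivative_one_sub_X_sq_mul_derivative_iterate_derivative_pow (k : ℕ) :
    derivative ((1 - X ^ 2) * derivative (derivative^[k] ((X ^ 2 - 1 : R[X]) ^ k))) =
      -((k : R[X]) * ((k : R[X]) + 1)) * derivative^[k] ((X ^ 2 - 1) ^ k) := by
  have hu := congrArg (derivative^[k + 1]) (X_sq_sub_one_mul_derivative_pow (R := R) k)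
  rw [show 2 * (k : R[X]) * X * (X ^ 2 - 1) ^ k = ((2 * k : ℕ) : R[X]) * (X * (X ^ 2 - 1) ^ k) by
      push_cast; ring,
    iterate_derivative_natCast_mul, iterate_derivative_succ_X_mul,
    iterate_derivative_succ_X_sq_sub_one_mul_derivative] at hu
  simp only [Function.iterate_succ_apply'] at hu
  simp only [derivative_mul, derivative_sub, derivative_one, derivative_X_sq, C_ofNat]
  push_cast at hu
  linear_combination -hu

end Polynomial

/-- The Legendre polynomial `P_k` satisfies the Sturm–Liouville equation
`((1 - x²) P_k')' = -k(k+1) P_k`. -/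
theorem legendre_sturm_liouville (k : ℕ) :
    derivative ((1 - X ^ 2) * derivative (legendre k)) =
      (-(k * (k + 1) : ℝ)) • legendre k := by
  rw [legendre, derivative_smul, mul_smul_comm, derivative_smul,
    derivative_one_sub_X_sq_mul_derivative_iterate_derivative_pow, smul_comm,
    smul_eq_C_mul (-(k * (k + 1) : ℝ))]
  simp
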